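/- Let Ψ, Ψ̃ ∈ K^{m×n}, let x* ∈ K^n be s-sparse with support J*, let z ∈ K^m and y = Ψx* + z. Then for every index j ∈ {1,…,n} one has |(Ψ̃*y)_j − (x*)_j| ≤ θ_{s+1}(Ψ̃*Ψ)·‖x*‖₂ + (max_{1≤l≤n} ‖ψ̃_l‖₂)·‖z‖₂. -/

import Mathlib

/-!
With `e_j` the `j`-th unit vector, `(Ψ̃* y)_j - x*_j = (⟨e_j, Ψ̃*Ψ x*⟩ - ⟨e_j, x*⟩) + ⟨ψ̃_j, z⟩`.
Both `e_j` and `x*` are supported on `J* ∪ {j}`, a set of size at most `s + 1`, so the first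
term is at most `θ_{s+1}(Ψ̃*Ψ) ‖x*‖₂ ‖e_j‖₂ = θ_{s+1}(Ψ̃*Ψ) ‖x*‖₂`; the second is bounded by
Cauchy–Schwarz.
-/

open scoped BigOperators
open Matrix MeasureTheory

noncomputable section

namespace ObliquePursuit

variable {𝕜 : Type*} [RCLike 𝕜]

/-- The Euclidean (`ℓ²`) norm of a finitely indexed vector. -/
def l2 {ι : Type*} [Fintype ι] (x : ι → 𝕜) : ℝ :=
  Real.sqrt (∑ i, ‖x i‖ ^ 2)

/-- The spectral (`ℓ² → ℓ²` operator) norm of a matrix. -/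
def specNorm {ι κ : Type*} [Fintype ι] [Fintype κ] [DecidableEq κ]
    (M : Matrix ι κ 𝕜) : ℝ :=
  ‖LinearMap.toContinuousLinearMap (Matrix.toEuclideanLin M)‖

/-- `x` is `s`-sparse: it has at most `s` nonzero entries. -/
def Sparse {ι : Type*} (s : ℕ) (x : ι → 𝕜) : Prop :=
  ∃ J : Finset ι, J.card ≤ s ∧ ∀ i, x i ≠ 0 → i ∈ J

/-- The `s`-restricted biorthogonality constant `θ_s(M)`: the smallest `δ ≥ 0` such that
`|⟨y, Mx⟩ − ⟨y, x⟩| ≤ δ‖x‖₂‖y‖₂` for all `x, y` supported on a common index set of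
cardinality at most `s`. -/
def theta {ι : Type*} [Fintype ι] (s : ℕ) (M : Matrix ι ι 𝕜) : ℝ :=
  sInf {δ : ℝ | 0 ≤ δ ∧ ∀ J : Finset ι, J.card ≤ s →
    ∀ x y : ι → 𝕜, (∀ i, x i ≠ 0 → i ∈ J) → (∀ i, y i ≠ 0 → i ∈ J) →
      ‖star y ⬝ᵥ M.mulVec x - star y ⬝ᵥ x‖ ≤ δ * l2 x * l2 y}

/-- The `s`-restricted isometry constant `δ_s(Ψ)`. -/
def ric {ι κ : Type*} [Fintype ι] [Fintype κ] (s : ℕ) (Ψ : Matrix ι κ 𝕜) : ℝ :=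
  sInf {δ : ℝ | 0 ≤ δ ∧ ∀ x : κ → 𝕜, Sparse s x →
    (1 - δ) * l2 x ^ 2 ≤ l2 (Ψ.mulVec x) ^ 2 ∧
      l2 (Ψ.mulVec x) ^ 2 ≤ (1 + δ) * l2 x ^ 2}

/-- Coordinate projection `Π_J`: keep the entries indexed by `J`, zero out the others. -/
def proj {ι : Type*} [DecidableEq ι] (J : Finset ι) (x : ι → 𝕜) : ι → 𝕜 :=
  fun i => if i ∈ J then x i else 0

/-- The column submatrix `Ψ_J` of `Ψ` formed by the columns indexed by `J`. -/
def cols {ι κ : Type*} (Ψ : Matrix ι κ 𝕜) (J : Finset κ) :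
    Matrix ι {j // j ∈ J} 𝕜 :=
  Ψ.submatrix id fun j => (j : κ)

/-- The `j`-th column of `Ψ`. -/
def col {ι κ : Type*} (Ψ : Matrix ι κ 𝕜) (j : κ) : ι → 𝕜 :=
  fun i => Ψ i j

/-- The complementary oblique projector `E = I − Ψ_J (Ψ̃_J^* Ψ_J)⁻¹ Ψ̃_J^*`
(equal to `I` when `J = ∅`). -/
def obliqueE {ι κ : Type*} [Fintype ι] [DecidableEq ι] [DecidableEq κ]
    (Ψ Ψt : Matrix ι κ 𝕜) (J : Finset κ) : Matrix ι ι 𝕜 :=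
  1 - cols Ψ J * ((cols Ψt J)ᴴ * cols Ψ J)⁻¹ * (cols Ψt J)ᴴ

/-- The smallest (real) eigenvalue of a matrix. -/
def lamMin {ι : Type*} [Fintype ι] (G : Matrix ι ι 𝕜) : ℝ :=
  sInf {r : ℝ | ∃ v : ι → 𝕜, v ≠ 0 ∧ G.mulVec v = (r : 𝕜) • v}

/-- The `j`-th largest singular value (1-indexed) of a matrix, characterized via the
Eckart–Young–Mirsky theorem: `σ_j(A) = min { ‖A − B‖ : rank B < j }` where `‖·‖` is the
spectral norm. -/
def singVal {ι κ : Type*} [Fintype ι] [Fintype κ] [DecidableEq κ]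
    (A : Matrix ι κ 𝕜) (j : ℕ) : ℝ :=
  sInf {r : ℝ | ∃ B : Matrix ι κ 𝕜, B.rank < j ∧ r = specNorm (A - B)}

section Euclidean

variable {ι κ : Type*} [Fintype ι]

lemma l2_eq_norm_toLp (x : ι → 𝕜) : l2 x = ‖WithLp.toLp 2 x‖ := by
  rw [EuclideanSpace.norm_eq]
  rfl

lemma l2_nonneg (x : ι → 𝕜) : 0 ≤ l2 x := Real.sqrt_nonneg _

lemma norm_apply_le_l2 (x : ι → 𝕜) (i : ι) : ‖x i‖ ≤ l2 x := by
  rw [l2_eq_norm_toLp]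
  exact PiLp.norm_apply_le (WithLp.toLp 2 x) i

lemma l2_single_one [DecidableEq ι] (i : ι) : l2 (Pi.single i (1 : 𝕜)) = 1 := by
  rw [l2_eq_norm_toLp]
  exact (PiLp.norm_single 2 (fun _ => 𝕜) i 1).trans norm_one

lemma norm_star_dotProduct_le (y x : ι → 𝕜) : ‖star y ⬝ᵥ x‖ ≤ l2 y * l2 x := by
  rw [dotProduct_comm, l2_eq_norm_toLp, l2_eq_norm_toLp]
  simpa [EuclideanSpace.inner_eq_star_dotProduct] using
    norm_inner_le_norm (𝕜 := 𝕜) (WithLp.toLp 2 y) (WithLp.toLp 2 x)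

lemma norm_star_dotProduct_mulVec_le [Fintype κ] (A : Matrix ι κ 𝕜) (y : ι → 𝕜) (x : κ → 𝕜) :
    ‖star y ⬝ᵥ A *ᵥ x‖ ≤ (∑ i, ∑ k, ‖A i k‖) * (l2 x * l2 y) := by
  calc ‖star y ⬝ᵥ A *ᵥ x‖ = ‖∑ i, ∑ k, star (y i) * (A i k * x k)‖ := by
        simp only [dotProduct, mulVec, Finset.mul_sum, Pi.star_apply]
    _ ≤ ∑ i, ∑ k, ‖star (y i) * (A i k * x k)‖ :=
        (norm_sum_le _ _).trans (Finset.sum_le_sum fun i _ => norm_sum_le _ _)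
    _ ≤ ∑ i, ∑ k, ‖A i k‖ * (l2 x * l2 y) := by
        gcongr with i _ k _
        rw [norm_mul, norm_mul, norm_star, mul_left_comm, mul_comm ‖y i‖]
        gcongr
        exacts [l2_nonneg x, norm_apply_le_l2 x k, norm_apply_le_l2 y i]
    _ = (∑ i, ∑ k, ‖A i k‖) * (l2 x * l2 y) := by simp only [Finset.sum_mul]

end Euclidean

section Theta

variable {ι : Type*} [Fintype ι]

lemma norm_sub_le_theta_mul (s : ℕ) (M : Matrix ι ι 𝕜) (J : Finset ι) (hJ : J.card ≤ s)
    (x y : ι → 𝕜) (hx : ∀ i, x i ≠ 0 → i ∈ J) (hy : ∀ i, y i ≠ 0 → i ∈ J) :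
    ‖star y ⬝ᵥ M *ᵥ x - star y ⬝ᵥ x‖ ≤ theta s M * l2 x * l2 y := by
  classical
  have hc : 0 ≤ l2 x * l2 y := mul_nonneg (l2_nonneg x) (l2_nonneg y)
  -- The entrywise `ℓ¹` norm of `M - 1` lies in the set defining `theta`, so its infimum is not
  -- the junk value `sInf ∅ = 0`.
  have hC : 0 ≤ ∑ i, ∑ k, ‖(M - 1) i k‖ := by positivity
  unfold theta
  rw [mul_assoc, mul_comm, ← smul_eq_mul, ← Real.sInf_smul_of_nonneg hc]
  refine le_csInf (Set.Nonempty.smul_set ⟨_, hC, fun _ _ x' y' _ _ => ?_⟩) ?_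
  · rw [← dotProduct_sub, mul_assoc, show M *ᵥ x' - x' = (M - 1) *ᵥ x' by
      rw [sub_mulVec, one_mulVec]]
    exact norm_star_dotProduct_mulVec_le _ _ _
  · rintro _ ⟨δ, hδ, rfl⟩
    show _ ≤ (l2 x * l2 y) * δ
    rw [mul_comm, ← mul_assoc]
    exact hδ.2 J hJ x y hx hy

end Theta

section Proxy

variable {ι κ : Type*} [Fintype ι]

lemma norm_mulVec_apply_sub_le_theta (s : ℕ) (M : Matrix ι ι 𝕜) (x : ι → 𝕜) (J : Finset ι)
    (hJ : J.card ≤ s) (hx : ∀ i, x i ≠ 0 → i ∈ J) (j : ι) :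
    ‖(M *ᵥ x) j - x j‖ ≤ theta (s + 1) M * l2 x := by
  classical
  have hsingle : ∀ i, (Pi.single j 1 : ι → 𝕜) i ≠ 0 → i ∈ insert j J := fun i hi =>
    Finset.mem_insert.2 (Or.inl (by_contra fun hij => hi (Pi.single_eq_of_ne hij _)))
  have h := norm_sub_le_theta_mul (s + 1) M (insert j J)
    ((Finset.card_insert_le j J).trans (by omega)) x (Pi.single j 1)
    (fun i hi => Finset.mem_insert_of_mem (hx i hi)) hsingle
  rwa [Pi.star_single, star_one, single_one_dotProduct, single_one_dotProduct, l2_single_one,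
    mul_one] at h

lemma norm_conjTranspose_mulVec_apply_le [Fintype κ] (A : Matrix ι κ 𝕜) (z : ι → 𝕜) (j : κ) :
    ‖(Aᴴ *ᵥ z) j‖ ≤ (⨆ l, l2 (col A l)) * l2 z :=
  calc ‖(Aᴴ *ᵥ z) j‖ = ‖star (col A j) ⬝ᵥ z‖ := rfl
    _ ≤ l2 (col A j) * l2 z := norm_star_dotProduct_le _ _
    _ ≤ (⨆ l, l2 (col A l)) * l2 z := by
        gcongr
        · exact l2_nonneg z
        · exact le_ciSup (Set.finite_range fun l => l2 (col A l)).bddAbove j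

end Proxy

/-- entrywise error bound for the proxy `Ψ̃* y`. -/
theorem statement0 (m n s : ℕ) (Ψ Ψt : Matrix (Fin m) (Fin n) 𝕜)
    (xstar : Fin n → 𝕜) (Jstar : Finset (Fin n))
    (hsupp : ∀ i, xstar i ≠ 0 ↔ i ∈ Jstar) (hcard : Jstar.card ≤ s)
    (z y : Fin m → 𝕜) (hy : y = Ψ.mulVec xstar + z) :
    ∀ j : Fin n,
      ‖Ψtᴴ.mulVec y j - xstar j‖ ≤
        theta (s + 1) (Ψtᴴ * Ψ) * l2 xstar + (⨆ l, l2 (col Ψt l)) * l2 z := by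
  intro j
  have hsplit : (Ψtᴴ *ᵥ y) j - xstar j = ((Ψtᴴ * Ψ) *ᵥ xstar) j - xstar j + (Ψtᴴ *ᵥ z) j := by
    rw [hy, mulVec_add, mulVec_mulVec, Pi.add_apply]
    ring
  rw [hsplit]
  exact (norm_add_le _ _).trans (add_le_add
    (norm_mulVec_apply_sub_le_theta s _ xstar Jstar hcard (fun i => (hsupp i).1) j)
    (norm_conjTranspose_mulVec_apply_le Ψt z j))
end ObliquePursuit
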